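/- Let G be a nontrivial connected graph, and let u and v be two vertices of G having at least two common neighbors. Then u and v receive different colors in any rainbow vertex-disconnection coloring of G. -/

import Mathlib

open SimpleGraph

variable {V : Type*}

/-- `c` is a rainbow vertex-disconnection coloring of `G`: for any two distinct vertices
`x, y` there is a set `S` avoiding `x` and `y` that meets every `x`-`y` walk of `G - xy`
(i.e. `x` and `y` lie in different components of `(G - xy) - S`), and which is rainbow
(when `x, y` nonadjacent), resp. such that `S + x` or `S + y` is rainbow (when adjacent). -/
def IsRVDColoring {α : Type*} (G : SimpleGraph V) (c : V → α) : Prop :=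
  ∀ x y : V, x ≠ y → ∃ S : Set V,
    x ∉ S ∧ y ∉ S ∧
    (∀ p : (G.deleteEdges {s(x, y)}).Walk x y, ∃ v ∈ p.support, v ∈ S) ∧
    (G.Adj x y → Set.InjOn c (insert x S) ∨ Set.InjOn c (insert y S)) ∧
    (¬ G.Adj x y → Set.InjOn c S)

/-- The rainbow vertex-disconnection number: the minimum number of colors of a
rainbow vertex-disconnection coloring. -/
noncomputable def rvd (G : SimpleGraph V) : ℕ :=
  sInf {n | ∃ c : V → Fin n, IsRVDColoring G c}

/-- `G` contains `K₄` as a minor (via a minor model with four branch sets). -/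
def HasK4Minor (G : SimpleGraph V) : Prop :=
  ∃ B : Fin 4 → Set V,
    (∀ i, (B i).Nonempty) ∧
    (∀ i, (G.induce (B i)).Connected) ∧
    (∀ i j, i ≠ j → Disjoint (B i) (B j)) ∧
    (∀ i j, i ≠ j → ∃ a ∈ B i, ∃ b ∈ B j, G.Adj a b)

/-- A finite graph is 2-connected if it has at least 3 vertices and deleting any
single vertex leaves a connected graph. -/
def TwoConnected [Fintype V] (G : SimpleGraph V) : Prop :=
  3 ≤ Fintype.card V ∧ ∀ w : V, (G.induce ({w}ᶜ : Set V)).Connected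

/-- Contraction of the edge `uv`: delete `v` and join `u` to the former neighbors of `v`. -/
def contractEdge (G : SimpleGraph V) (u v : V) : SimpleGraph {x : V // x ≠ v} where
  Adj a b := a ≠ b ∧ (G.Adj a b ∨ ((a : V) = u ∧ G.Adj v b) ∨ ((b : V) = u ∧ G.Adj v a))
  symm := by
    refine ⟨?_⟩
    rintro a b ⟨h1, h2⟩
    refine ⟨h1.symm, ?_⟩
    rcases h2 with h | h | h
    · exact Or.inl h.symm
    · exact Or.inr (Or.inr h)
    · exact Or.inr (Or.inl h)
  loopless := ⟨by rintro a ⟨h, _⟩; exact h rfl⟩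

/-- `T_G(u)`: vertices `x` of degree at least 3 that are adjacent to `u` or joined
to `u` through a `2`-vertex. -/
def Tset [Fintype V] (G : SimpleGraph V) [DecidableRel G.Adj] (u : V) : Set V :=
  {x | 3 ≤ G.degree x ∧ (G.Adj u x ∨ ∃ z : V, G.degree z = 2 ∧ G.Adj u z ∧ G.Adj z x)}

/-- `t_G(u) = |T_G(u)|`. -/
noncomputable def tnum [Fintype V] (G : SimpleGraph V) [DecidableRel G.Adj] (u : V) : ℕ :=
  (Tset G u).ncard

/-- An injective coloring: vertices with a common neighbor get distinct colors. -/
def IsInjectiveColoring {α : Type*} (G : SimpleGraph V) (c : V → α) : Prop :=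
  ∀ u v w : V, G.Adj u w → G.Adj v w → u ≠ v → c u ≠ c v

/-- The injective chromatic number. -/
noncomputable def injChromaticNumber (G : SimpleGraph V) : ℕ :=
  sInf {n | ∃ c : V → Fin n, IsInjectiveColoring G c}

/-- A graph has no cut vertex if deleting any vertex leaves a preconnected graph. -/
def HasNoCutVertex {W : Type*} (H : SimpleGraph W) : Prop :=
  ∀ w : W, (H.induce ({w}ᶜ : Set W)).Preconnected

/-- A block of `G`: a maximal connected subgraph of `G` without a cut vertex. -/
def IsBlock (G : SimpleGraph V) (H : G.Subgraph) : Prop :=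
  H.coe.Connected ∧ HasNoCutVertex H.coe ∧
    ∀ H' : G.Subgraph, H ≤ H' → H'.coe.Connected → HasNoCutVertex H'.coe → H' = H

/-- `c` is a `k`-fold coloring: each vertex receives `k` colors, adjacent vertices get
disjoint color sets. -/
def IsKFoldColoring {n : ℕ} (G : SimpleGraph V) (k : ℕ) (c : V → Finset (Fin n)) : Prop :=
  (∀ v, (c v).card = k) ∧ ∀ u v, G.Adj u v → Disjoint (c u) (c v)

/-- The `k`-fold chromatic number `χ_k(G)`. -/
noncomputable def kfoldChromaticNumber (G : SimpleGraph V) (k : ℕ) : ℕ :=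
  sInf {n | ∃ c : V → Finset (Fin n), IsKFoldColoring G k c}

/-- The fractional chromatic number `χ_f(G) = inf_k χ_k(G)/k`. -/
noncomputable def fracChromaticNumber (G : SimpleGraph V) : ℝ :=
  ⨅ k : {k : ℕ // 0 < k}, (kfoldChromaticNumber G k : ℝ) / (k : ℕ)

/-- The chromatic number as a natural number. -/
noncomputable def natChromaticNumber (G : SimpleGraph V) : ℕ :=
  sInf {n | G.Colorable n}

/-- The independence number `α(G)`. -/
noncomputable def indepNumber (G : SimpleGraph V) : ℕ :=
  sSup {n | ∃ s : Set V, (∀ u ∈ s, ∀ v ∈ s, ¬ G.Adj u v) ∧ s.ncard = n}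

/-- The bipartite graph `G̃` from the reduction: original vertices `V`, vertices
`s_{uv}, s'_{uv}` (type `↥G.edgeSet × Fin 2`, left summand) and `t_{uv}, t'_{uv}`
(right summand); each of `s_{uv}, s'_{uv}` is joined to `u` and `v`, and all
edges between `V_s` and `V_t` are present. -/
def tildeBip (G : SimpleGraph V) :
    SimpleGraph (V ⊕ ((↥G.edgeSet × Fin 2) ⊕ (↥G.edgeSet × Fin 2))) :=
  SimpleGraph.fromRel fun x y =>
    (∃ (a : V) (e : ↥G.edgeSet) (i : Fin 2),
        x = Sum.inl a ∧ y = Sum.inr (Sum.inl (e, i)) ∧ a ∈ (e : Sym2 V)) ∨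
    (∃ p q, x = Sum.inr (Sum.inl p) ∧ y = Sum.inr (Sum.inr q))

/-- The split graph `G̃` from the reduction: original vertices `V` and a clique on
`V_s = {s_{uv}, s'_{uv}, s''_{uv}}`, each of the three joined to `u` and `v`. -/
def tildeSplit (G : SimpleGraph V) : SimpleGraph (V ⊕ (↥G.edgeSet × Fin 3)) :=
  SimpleGraph.fromRel fun x y =>
    (∃ (a : V) (e : ↥G.edgeSet) (i : Fin 3),
        x = Sum.inl a ∧ y = Sum.inr (e, i) ∧ a ∈ (e : Sym2 V)) ∨
    (∃ p q, x = Sum.inr p ∧ y = Sum.inr q)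

/-- The graph `H`: `k` copies of `V` together with `V_s` and `V_t` as in `tildeBip`. -/
def HBip (G : SimpleGraph V) (k : ℕ) :
    SimpleGraph ((V × Fin k) ⊕ ((↥G.edgeSet × Fin 2) ⊕ (↥G.edgeSet × Fin 2))) :=
  SimpleGraph.fromRel fun x y =>
    (∃ (a : V) (j : Fin k) (e : ↥G.edgeSet) (i : Fin 2),
        x = Sum.inl (a, j) ∧ y = Sum.inr (Sum.inl (e, i)) ∧ a ∈ (e : Sym2 V)) ∨
    (∃ p q, x = Sum.inr (Sum.inl p) ∧ y = Sum.inr (Sum.inr q))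

/-- The graph `H`: `k` copies of `V` together with the clique `V_s` as in `tildeSplit`. -/
def HSplit (G : SimpleGraph V) (k : ℕ) :
    SimpleGraph ((V × Fin k) ⊕ (↥G.edgeSet × Fin 3)) :=
  SimpleGraph.fromRel fun x y =>
    (∃ (a : V) (j : Fin k) (e : ↥G.edgeSet) (i : Fin 3),
        x = Sum.inl (a, j) ∧ y = Sum.inr (e, i) ∧ a ∈ (e : Sym2 V)) ∨
    (∃ p q, x = Sum.inr p ∧ y = Sum.inr q)

/-! If `w₁ ≠ w₂` are common neighbours of `u` and `v`, then `w₁ u w₂` and `w₁ v w₂` are paths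
avoiding the edge `w₁w₂`, so every `w₁`–`w₂` vertex-cut contains both `u` and `v`. In both cases
of the definition the cut itself is rainbow, hence `c u ≠ c v`. -/

namespace SimpleGraph

variable {G : SimpleGraph V}

theorem mem_of_forall_walk_deleteEdges_meets {x y z : V} {S : Set V} (hx : x ∉ S) (hy : y ∉ S)
    (hcut : ∀ p : (G.deleteEdges {s(x, y)}).Walk x y, ∃ w ∈ p.support, w ∈ S)
    (hxz : G.Adj x z) (hzy : G.Adj z y) : z ∈ S := by
  have hxz' : (G.deleteEdges {s(x, y)}).Adj x z :=
    (deleteEdges_adj ..).2 ⟨hxz, fun h => hzy.ne (Sym2.congr_right.1 h)⟩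
  have hzy' : (G.deleteEdges {s(x, y)}).Adj z y :=
    (deleteEdges_adj ..).2 ⟨hzy, fun h => hxz.ne.symm (Sym2.congr_left.1 h)⟩
  obtain ⟨w, hw, hwS⟩ := hcut (.cons hxz' (.cons hzy' .nil))
  simp only [Walk.support_cons, Walk.support_nil, List.mem_cons,
    List.not_mem_nil, or_false] at hw
  rcases hw with rfl | rfl | rfl
  · exact absurd hwS hx
  · exact hwS
  · exact absurd hwS hy

end SimpleGraph

open SimpleGraph

theorem IsRVDColoring.exists_injOn_cut {α : Type*} {G : SimpleGraph V} {c : V → α}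
    (hc : IsRVDColoring G c) {x y : V} (hxy : x ≠ y) :
    ∃ S : Set V, x ∉ S ∧ y ∉ S ∧
      (∀ p : (G.deleteEdges {s(x, y)}).Walk x y, ∃ w ∈ p.support, w ∈ S) ∧ Set.InjOn c S := by
  obtain ⟨S, hx, hy, hcut, hadj, hnadj⟩ := hc x y hxy
  refine ⟨S, hx, hy, hcut, ?_⟩
  by_cases h : G.Adj x y
  · rcases hadj h with hinj | hinj <;> exact hinj.mono (Set.subset_insert _ _)
  · exact hnadj h

theorem ne_color_of_two_common_neighbors_general (G : SimpleGraph V)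
    (u v : V) (huv : u ≠ v)
    (hcommon : ∃ w₁ w₂ : V, w₁ ≠ w₂ ∧ G.Adj u w₁ ∧ G.Adj v w₁ ∧ G.Adj u w₂ ∧ G.Adj v w₂)
    {α : Type*} (c : V → α) (hc : IsRVDColoring G c) :
    c u ≠ c v := by
  obtain ⟨w₁, w₂, hw, huw₁, hvw₁, huw₂, hvw₂⟩ := hcommon
  obtain ⟨S, hw₁S, hw₂S, hcut, hinj⟩ := hc.exists_injOn_cut hw
  have hu : u ∈ S := mem_of_forall_walk_deleteEdges_meets hw₁S hw₂S hcut huw₁.symm huw₂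
  have hv : v ∈ S := mem_of_forall_walk_deleteEdges_meets hw₁S hw₂S hcut hvw₁.symm hvw₂
  exact fun h => huv (hinj hu hv h)

/-- In a nontrivial connected graph, two vertices with at least two common
neighbors receive different colors in any rainbow vertex-disconnection coloring. -/
theorem ne_color_of_two_common_neighbors [Fintype V] (G : SimpleGraph V)
    (hconn : G.Connected) (hnontrivial : 1 < Fintype.card V)
    (u v : V) (huv : u ≠ v)
    (hcommon : ∃ w₁ w₂ : V, w₁ ≠ w₂ ∧ G.Adj u w₁ ∧ G.Adj v w₁ ∧ G.Adj u w₂ ∧ G.Adj v w₂)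
    {α : Type*} (c : V → α) (hc : IsRVDColoring G c) :
    c u ≠ c v :=
  ne_color_of_two_common_neighbors_general G u v huv hcommon c hc
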